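/- Let $m \geq 2$, let $T$ be the first arrival time of an inhomogeneous Poisson process with intensity $\lambda_m(t) = (1-e^{-t})^{m-1}$, and for $1 \leq i \leq m-1$ let $N^{(i)}$ be independent inhomogeneous Poisson processes with intensities $\lambda_i(t) = (1-e^{-t})^{i-1}e^{-t}$, all independent of $T$'s process. Define $\tilde{\mathcal S} := m + \sum_{i=1}^{m-1} i\, N^{(i)}_T$. Then $\mathbb{E}(\tilde{\mathcal S}) = e^{H_{m-1}}$. -/

import Mathlib

/-!
Write `u(t) = 1 - e^{-t}`. At a fixed time, `N^{(i)}_t` is Poisson with mean `Λ_i(t) = u(t)^i / i`.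
The paths are monotone and `T` is independent of them, so `N^{(i)}_T` is squeezed between the
processes at the grid times `⌊kT⌋ / k` and `⌈kT⌉ / k`, which are functions of `T` with countably
many values; letting `k → ∞` gives `E N^{(i)}_T = E Λ_i(T)`. Hence
`E S̃ = m + E ∑_{i=1}^{m-1} u(T)^i`, and by the layer cake formula the last expectation is
`∫_0^∞ (d/ds ∑_{i=1}^{m-1} u^i) P(T > s) ds`. Since `P(T > s) = e^{-s} e^{L(u)}` with
`L(u) = ∑_{j=1}^{m-1} u^j / j`, the integrand is the derivative of `(m - (m-1) u) e^{L(u)}`,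
which equals `m` at `s = 0` and tends to `e^{L(1)} = e^{H_{m-1}}`.
-/

open MeasureTheory ProbabilityTheory Filter Topology Real Finset
open scoped ENNReal Nat

section RandomTime

variable {Ω : Type*} [MeasurableSpace Ω] {μ : Measure Ω}

theorem lintegral_apply_eq_of_indepFun {κ : Type*} [MeasurableSpace κ] [Countable κ]
    [MeasurableSingletonClass κ] [IsFiniteMeasure μ] {X : κ → Ω → ℝ≥0∞}
    (hX : ∀ k, Measurable (X k)) {K : Ω → κ} (hK : Measurable K)
    (hindep : IndepFun (fun ω k => X k ω) K μ) :
    ∫⁻ ω, X (K ω) ω ∂μ = ∫⁻ ω, ∫⁻ ω', X (K ω) ω' ∂μ ∂μ := by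
  have hY : Measurable fun ω k => X k ω := measurable_pi_lambda _ hX
  have heval : Measurable fun p : (κ → ℝ≥0∞) × κ => p.1 p.2 :=
    measurable_from_prod_countable_left fun k => measurable_pi_apply k
  have hlaw := (indepFun_iff_map_prod_eq_prod_map_map hY.aemeasurable hK.aemeasurable).mp hindep
  calc ∫⁻ ω, X (K ω) ω ∂μ
      = ∫⁻ p, p.1 p.2 ∂(μ.map fun ω => (fun k => X k ω, K ω)) :=
        (lintegral_map heval (hY.prodMk hK)).symm
    _ = ∫⁻ k, ∫⁻ y, y k ∂(μ.map fun ω k => X k ω) ∂(μ.map K) := by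
        rw [hlaw, lintegral_prod_symm' _ heval]
    _ = ∫⁻ ω, ∫⁻ ω', X (K ω) ω' ∂μ ∂μ := by
        rw [lintegral_map (measurable_of_countable _) hK]
        refine lintegral_congr fun ω => ?_
        exact lintegral_map (measurable_pi_apply _) hY

theorem lintegral_eq_of_le_of_le_of_tendsto {f : Ω → ℝ≥0∞} {g G : ℕ → Ω → ℝ≥0∞} {L : ℝ≥0∞}
    (hg : ∀ n, Measurable (g n)) (hG : ∀ n, Measurable (G n))
    (hgf : ∀ n, g n ≤ f) (hfG : ∀ n, f ≤ G n) (hL : L ≠ ∞)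
    (hg_lim : Tendsto (fun n => ∫⁻ ω, g n ω ∂μ) atTop (𝓝 L))
    (hG_lim : Tendsto (fun n => ∫⁻ ω, G n ω ∂μ) atTop (𝓝 L)) :
    AEMeasurable f μ ∧ ∫⁻ ω, f ω ∂μ = L := by
  have hsup_le : ∀ ω, (⨆ n, g n ω) ≤ f ω := fun ω => iSup_le fun n => hgf n ω
  have hle_inf : ∀ ω, f ω ≤ ⨅ n, G n ω := fun ω => le_iInf fun n => hfG n ω
  have hL_le : L ≤ ∫⁻ ω, ⨆ n, g n ω ∂μ :=
    le_of_tendsto' hg_lim fun n => lintegral_mono fun ω => le_iSup (fun n => g n ω) n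
  have hinf_le : ∫⁻ ω, ⨅ n, G n ω ∂μ ≤ L :=
    ge_of_tendsto' hG_lim fun n => lintegral_mono fun ω => iInf_le (fun n => G n ω) n
  have hsup_inf : (fun ω => ⨆ n, g n ω) =ᵐ[μ] fun ω => ⨅ n, G n ω :=
    ae_eq_of_ae_le_of_lintegral_le (ae_of_all _ fun ω => (hsup_le ω).trans (hle_inf ω))
      (ne_top_of_le_ne_top hL ((lintegral_mono fun ω => (hsup_le ω).trans (hle_inf ω)).trans
        hinf_le)) (Measurable.iInf hG).aemeasurable (hinf_le.trans hL_le)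
  have hf : f =ᵐ[μ] fun ω => ⨆ n, g n ω := by
    filter_upwards [hsup_inf] with ω hω
    exact le_antisymm (hω ▸ hle_inf ω) (hsup_le ω)
  refine ⟨(Measurable.iSup hg).aemeasurable.congr hf.symm, ?_⟩
  rw [lintegral_congr_ae hf]
  exact le_antisymm ((lintegral_mono fun ω => (hsup_le ω).trans (hle_inf ω)).trans hinf_le) hL_le

theorem tendsto_lintegral_comp_of_continuousOn [IsFiniteMeasure μ] {Λ : ℝ → ℝ≥0∞}
    (hΛc : ContinuousOn Λ (Set.Ici 0)) {C : ℝ≥0∞} (hC : C ≠ ∞) (hΛC : ∀ t, 0 ≤ t → Λ t ≤ C)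
    {τ : ℕ → Ω → ℝ} {T : Ω → ℝ} (hτ : ∀ n, Measurable fun ω => Λ (τ n ω))
    (hτ0 : ∀ n ω, 0 ≤ τ n ω) (hT0 : ∀ ω, 0 ≤ T ω)
    (hτT : ∀ ω, Tendsto (fun n => τ n ω) atTop (𝓝 (T ω))) :
    Tendsto (fun n => ∫⁻ ω, Λ (τ n ω) ∂μ) atTop (𝓝 (∫⁻ ω, Λ (T ω) ∂μ)) := by
  refine tendsto_lintegral_of_dominated_convergence (fun _ => C) hτ
    (fun n => ae_of_all _ fun ω => hΛC _ (hτ0 n ω)) ?_ (ae_of_all _ fun ω => ?_)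
  · simpa [lintegral_const] using ENNReal.mul_ne_top hC (measure_ne_top μ Set.univ)
  · exact ((hΛc (T ω) (hT0 ω)).tendsto).comp
      (tendsto_nhdsWithin_iff.mpr ⟨hτT ω, Eventually.of_forall fun n => hτ0 n ω⟩)

section Monotone

variable [IsFiniteMeasure μ] {X : ℝ → Ω → ℝ≥0∞} (hX : ∀ t, Measurable (X t))
  {T : Ω → ℝ} (hT : Measurable T) (hT0 : ∀ ω, 0 ≤ T ω) (hindep : IndepFun (fun ω t => X t ω) T μ)
  {Λ : ℝ → ℝ≥0∞} (hΛ : ∀ t, 0 ≤ t → ∫⁻ ω, X t ω ∂μ = Λ t) (hΛc : ContinuousOn Λ (Set.Ici 0))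
  {C : ℝ≥0∞} (hC : C ≠ ∞) (hΛC : ∀ t, 0 ≤ t → Λ t ≤ C)
include hX hT hT0 hindep hΛ hΛc hC hΛC

theorem tendsto_lintegral_apply_grid_of_indepFun {q : ℝ → ℝ → ℕ}
    (hq : ∀ x, Measurable fun t => q t x)
    (hqT : ∀ t, 0 ≤ t → Tendsto (fun x => (q t x : ℝ) / x) atTop (𝓝 t)) :
    (∀ n : ℕ, Measurable fun ω => X (q (T ω) (n + 1) / (n + 1)) ω) ∧
      Tendsto (fun n : ℕ => ∫⁻ ω, X (q (T ω) (n + 1) / (n + 1)) ω ∂μ) atTop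
        (𝓝 (∫⁻ ω, Λ (T ω) ∂μ)) := by
  have hK : ∀ n : ℕ, Measurable fun ω => q (T ω) (n + 1) := fun n => (hq _).comp hT
  have hs : ∀ n k : ℕ, (0 : ℝ) ≤ k / (n + 1) := fun n k => by positivity
  have hXK : ∀ n : ℕ, ∫⁻ ω, X (q (T ω) (n + 1) / (n + 1)) ω ∂μ =
      ∫⁻ ω, Λ (q (T ω) (n + 1) / (n + 1)) ∂μ := fun n => by
    rw [lintegral_apply_eq_of_indepFun (X := fun k : ℕ => X (k / (n + 1))) (fun k => hX _) (hK n)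
      (hindep.comp (measurable_pi_lambda _ fun k => measurable_pi_apply _) (hq _))]
    exact lintegral_congr fun ω => hΛ _ (hs n _)
  refine ⟨fun n => (measurable_from_prod_countable_left
    (f := fun p : Ω × ℕ => X (p.2 / (n + 1)) p.1) fun k => hX (k / (n + 1))).comp
      (measurable_id.prodMk (hK n)), ?_⟩
  refine Tendsto.congr (fun n => (hXK n).symm) ?_
  refine tendsto_lintegral_comp_of_continuousOn hΛc hC hΛC
    (fun n => (measurable_from_nat (f := fun k => Λ (k / (n + 1)))).comp (hK n))
    (fun n ω => hs n _) hT0 fun ω => (hqT _ (hT0 ω)).comp ?_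
  exact tendsto_atTop_add_const_right _ 1 tendsto_natCast_atTop_atTop

theorem lintegral_apply_of_indepFun_of_monotone (hmono : ∀ ω, Monotone fun t => X t ω) :
    AEMeasurable (fun ω => X (T ω) ω) μ ∧ ∫⁻ ω, X (T ω) ω ∂μ = ∫⁻ ω, Λ (T ω) ∂μ := by
  obtain ⟨hfloor, hfloor_lim⟩ := tendsto_lintegral_apply_grid_of_indepFun hX hT hT0 hindep hΛ
    hΛc hC hΛC (q := fun t x => ⌊t * x⌋₊) (fun x => by fun_prop)
    fun t ht => tendsto_nat_floor_mul_div_atTop ht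
  obtain ⟨hceil, hceil_lim⟩ := tendsto_lintegral_apply_grid_of_indepFun hX hT hT0 hindep hΛ
    hΛc hC hΛC (q := fun t x => ⌈t * x⌉₊) (fun x => by fun_prop)
    fun t ht => tendsto_nat_ceil_mul_div_atTop ht
  have hpos : ∀ n : ℕ, (0 : ℝ) < n + 1 := fun n => by positivity
  refine lintegral_eq_of_le_of_le_of_tendsto hfloor hceil (fun n ω => hmono ω ?_)
    (fun n ω => hmono ω ?_) ?_ hfloor_lim hceil_lim
  · rw [div_le_iff₀ (hpos n)]
    exact Nat.floor_le (by have := hT0 ω; positivity)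
  · rw [le_div_iff₀ (hpos n)]
    exact Nat.le_ceil _
  · exact ne_top_of_le_ne_top (ENNReal.mul_ne_top hC (measure_ne_top μ Set.univ))
      (by simpa [lintegral_const] using lintegral_mono fun ω => hΛC _ (hT0 ω))

end Monotone

end RandomTime

theorem Real.hasSum_pow_div_factorial (r : ℝ) : HasSum (fun k : ℕ => r ^ k / k !) (exp r) := by
  rw [exp_eq_exp_ℝ]
  exact NormedSpace.expSeries_div_hasSum_exp r

theorem hasSum_mul_poisson (r : ℝ) :
    HasSum (fun k : ℕ => k * (exp (-r) * r ^ k / k !)) r := by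
  have hshift : HasSum (fun k : ℕ => ((k + 1 : ℕ) : ℝ) * (exp (-r) * r ^ (k + 1) / (k + 1) !))
      (r * exp (-r) * exp r) := by
    have hterm : (fun k : ℕ => ((k + 1 : ℕ) : ℝ) * (exp (-r) * r ^ (k + 1) / (k + 1) !)) =
        fun k => r * exp (-r) * (r ^ k / k !) := by
      funext k
      rw [Nat.factorial_succ]
      push_cast
      field_simp
      ring
    rw [hterm]
    exact (hasSum_pow_div_factorial r).mul_left _
  have h := (hasSum_nat_add_iff (f := fun k : ℕ => k * (exp (-r) * r ^ k / k !)) 1).mp hshift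
  rwa [Finset.sum_range_one, Nat.cast_zero, zero_mul, add_zero, mul_assoc, ← exp_add,
    neg_add_cancel, exp_zero, mul_one] at h

theorem lintegral_natCast_of_poisson {Ω : Type*} [MeasurableSpace Ω] {μ : Measure Ω}
    [IsFiniteMeasure μ] {X : Ω → ℕ} (hX : Measurable X) {r : ℝ} (hr : 0 ≤ r)
    (hlaw : ∀ k : ℕ, (μ {ω | X ω = k}).toReal = exp (-r) * r ^ k / k !) :
    ∫⁻ ω, (X ω : ℝ≥0∞) ∂μ = ENNReal.ofReal r := by
  have hterm : ∀ k : ℕ,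
      (k : ℝ≥0∞) * μ.map X {k} = ENNReal.ofReal (k * (exp (-r) * r ^ k / k !)) := by
    intro k
    rw [Measure.map_apply hX (measurableSet_singleton k), ENNReal.ofReal_mul (Nat.cast_nonneg k),
      ← hlaw k, ENNReal.ofReal_toReal (measure_ne_top μ _), ENNReal.ofReal_natCast]
    rfl
  rw [← lintegral_map (f := fun k : ℕ => (k : ℝ≥0∞)) (measurable_of_countable _) hX,
    lintegral_countable', tsum_congr hterm, ← ENNReal.ofReal_tsum_of_nonneg (fun k => by positivity)
      (hasSum_mul_poisson r).summable, (hasSum_mul_poisson r).tsum_eq]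

theorem one_sub_mul_sum_pow_sub_one {R : Type*} [CommRing R] (u : R) (n : ℕ) :
    (1 - u) * ∑ j ∈ Icc 1 n, u ^ (j - 1) = 1 - u ^ n := by
  induction n with
  | zero => simp
  | succ n ih =>
    rw [sum_Icc_succ_top (by omega), mul_add, ih, Nat.add_sub_cancel]
    ring

theorem one_sub_mul_sum_mul_pow_sub_one {R : Type*} [CommRing R] (u : R) (n : ℕ) :
    (1 - u) * ∑ i ∈ Icc 1 n, (i : R) * u ^ (i - 1) =
      (n + 1 - n * u) * ∑ j ∈ Icc 1 n, u ^ (j - 1) - n := by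
  induction n with
  | zero => simp
  | succ n ih =>
    rw [sum_Icc_succ_top (by omega), sum_Icc_succ_top (by omega), mul_add, ih, Nat.add_sub_cancel]
    have hgeom := one_sub_mul_sum_pow_sub_one u n
    push_cast
    linear_combination -hgeom

theorem hasDerivAt_one_sub_exp_neg (x : ℝ) :
    HasDerivAt (fun t => 1 - exp (-t)) (exp (-x)) x := by
  simpa using ((hasDerivAt_neg x).exp).const_sub 1

theorem hasDerivAt_sum_pow_div (n : ℕ) (u : ℝ) :
    HasDerivAt (fun v : ℝ => ∑ j ∈ Icc 1 n, v ^ j / j) (∑ j ∈ Icc 1 n, u ^ (j - 1)) u := by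
  refine HasDerivAt.fun_sum fun j hj => ?_
  have hj : (j : ℝ) ≠ 0 := by have := (mem_Icc.mp hj).1; positivity
  simpa [hj] using (hasDerivAt_pow j u).div_const (j : ℝ)

theorem sum_Icc_zero_pow (n : ℕ) : ∑ j ∈ Icc 1 n, (0 : ℝ) ^ j = 0 :=
  sum_eq_zero fun j hj => zero_pow (by grind)

theorem sum_Icc_zero_pow_div (n : ℕ) : ∑ j ∈ Icc 1 n, (0 : ℝ) ^ j / j = 0 :=
  sum_eq_zero fun j hj => by rw [zero_pow (by grind), zero_div]

theorem one_sub_exp_neg_mem_Icc {x : ℝ} (hx : 0 ≤ x) : 1 - exp (-x) ∈ Set.Icc (0 : ℝ) 1 :=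
  ⟨by simpa using exp_le_one_iff.mpr (neg_nonpos.mpr hx), by linarith [exp_pos (-x)]⟩

theorem integral_one_sub_exp_neg_pow_mul_exp_neg {i : ℕ} (hi : i ≠ 0) (t : ℝ) :
    ∫ s in (0 : ℝ)..t, (1 - exp (-s)) ^ (i - 1) * exp (-s) = (1 - exp (-t)) ^ i / i := by
  have hderiv : ∀ x : ℝ, HasDerivAt (fun s => (1 - exp (-s)) ^ i / i)
      ((1 - exp (-x)) ^ (i - 1) * exp (-x)) x := fun x => by
    have hi' : (i : ℝ) ≠ 0 := by positivity
    refine (((hasDerivAt_one_sub_exp_neg x).fun_pow i).div_const (i : ℝ)).congr_deriv ?_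
    field_simp
  rw [intervalIntegral.integral_eq_sub_of_hasDerivAt (fun x _ => hderiv x)
    (Continuous.intervalIntegrable (by fun_prop) _ _)]
  simp [zero_pow hi]

theorem integral_one_sub_exp_neg_pow (n : ℕ) (t : ℝ) :
    ∫ s in (0 : ℝ)..t, (1 - exp (-s)) ^ n = t - ∑ j ∈ Icc 1 n, (1 - exp (-t)) ^ j / j := by
  have hderiv : ∀ x : ℝ, HasDerivAt (fun s => s - ∑ j ∈ Icc 1 n, (1 - exp (-s)) ^ j / j)
      ((1 - exp (-x)) ^ n) x := fun x => by
    refine ((hasDerivAt_id x).fun_sub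
      ((hasDerivAt_sum_pow_div n _).comp x (hasDerivAt_one_sub_exp_neg x))).congr_deriv ?_
    have := one_sub_mul_sum_pow_sub_one (1 - exp (-x)) n
    rw [sub_sub_cancel] at this
    linear_combination -this
  rw [intervalIntegral.integral_eq_sub_of_hasDerivAt (fun x _ => hderiv x)
    (Continuous.intervalIntegrable (by fun_prop) _ _)]
  simp [sum_Icc_zero_pow_div]

theorem hasDerivAt_mul_exp_sum_pow_div (n : ℕ) (x : ℝ) :
    HasDerivAt (fun s => (n + 1 - n * (1 - exp (-s))) * exp (∑ j ∈ Icc 1 n, (1 - exp (-s)) ^ j / j))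
      (exp (-(x - ∑ j ∈ Icc 1 n, (1 - exp (-x)) ^ j / j)) *
        ∑ i ∈ Icc 1 n, i * (1 - exp (-x)) ^ (i - 1) * exp (-x)) x := by
  have hu := hasDerivAt_one_sub_exp_neg x
  refine (((hu.const_mul (n : ℝ)).const_sub ((n : ℝ) + 1)).mul
    ((hasDerivAt_sum_pow_div n _).comp x hu).exp).congr_deriv ?_
  simp only [Function.comp_def]
  have key := one_sub_mul_sum_mul_pow_sub_one (1 - exp (-x)) n
  rw [sub_sub_cancel] at key
  have hρ : exp (-(x - ∑ j ∈ Icc 1 n, (1 - exp (-x)) ^ j / j)) =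
      exp (∑ j ∈ Icc 1 n, (1 - exp (-x)) ^ j / j) * exp (-x) := by
    rw [← exp_add]; ring_nf
  rw [hρ, ← sum_mul]
  linear_combination -exp (-x) * exp (∑ j ∈ Icc 1 n, (1 - exp (-x)) ^ j / j) * key

theorem lintegral_Ioi_survival_mul_weight (n : ℕ) :
    ∫⁻ s in Set.Ioi 0, ENNReal.ofReal (exp (-(s - ∑ j ∈ Icc 1 n, (1 - exp (-s)) ^ j / j)) *
        ∑ i ∈ Icc 1 n, i * (1 - exp (-s)) ^ (i - 1) * exp (-s)) =
      ENNReal.ofReal (exp (harmonic n) - (n + 1)) := by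
  have hnonneg : ∀ x ∈ Set.Ioi (0 : ℝ), 0 ≤ exp (-(x - ∑ j ∈ Icc 1 n, (1 - exp (-x)) ^ j / j)) *
      ∑ i ∈ Icc 1 n, i * (1 - exp (-x)) ^ (i - 1) * exp (-x) := fun x hx => by
    have := (one_sub_exp_neg_mem_Icc (le_of_lt hx)).1
    positivity
  have hlim : Tendsto (fun s => (n + 1 - n * (1 - exp (-s))) *
      exp (∑ j ∈ Icc 1 n, (1 - exp (-s)) ^ j / j)) atTop (𝓝 (exp (∑ j ∈ Icc 1 n, (j : ℝ)⁻¹))) := by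
    have hu : Tendsto (fun s => 1 - exp (-s)) atTop (𝓝 1) := by
      simpa using tendsto_exp_neg_atTop_nhds_zero.const_sub 1
    have hcont : Continuous fun v : ℝ => (n + 1 - n * v) * exp (∑ j ∈ Icc 1 n, v ^ j / j) := by
      fun_prop
    have h1 := hcont.tendsto 1
    simp only [mul_one, add_sub_cancel_left, one_mul, one_pow, one_div] at h1
    exact h1.comp hu
  have hderiv := fun x (_ : x ∈ Set.Ici (0 : ℝ)) => hasDerivAt_mul_exp_sum_pow_div n x
  rw [← ofReal_integral_eq_lintegral_ofReal (integrableOn_Ioi_deriv_of_nonneg' hderiv hnonneg hlim)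
    ((ae_restrict_iff' measurableSet_Ioi).mpr (ae_of_all _ hnonneg)),
    integral_Ioi_of_hasDerivAt_of_nonneg' hderiv hnonneg hlim]
  simp [sum_Icc_zero_pow_div, harmonic_eq_sum_Icc]

theorem integral_sum_mul_pow_mul_exp_neg (n : ℕ) (t : ℝ) :
    ∫ s in (0 : ℝ)..t, ∑ i ∈ Icc 1 n, i * (1 - exp (-s)) ^ (i - 1) * exp (-s) =
      ∑ i ∈ Icc 1 n, (1 - exp (-t)) ^ i := by
  rw [intervalIntegral.integral_eq_sub_of_hasDerivAt
    (fun x _ => HasDerivAt.fun_sum fun i _ => (hasDerivAt_one_sub_exp_neg x).fun_pow i)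
    (Continuous.intervalIntegrable (by fun_prop) _ _)]
  simp [sum_Icc_zero_pow]

theorem lintegral_sum_pow_one_sub_exp_neg {Ω : Type*} [MeasurableSpace Ω] {μ : Measure Ω}
    [IsFiniteMeasure μ] {T : Ω → ℝ} (hT : Measurable T) (hT0 : ∀ ω, 0 ≤ T ω) (n : ℕ)
    (hTdist : ∀ t, 0 ≤ t →
      (μ {ω | t < T ω}).toReal = exp (-(∫ s in (0 : ℝ)..t, (1 - exp (-s)) ^ n))) :
    ∫⁻ ω, ENNReal.ofReal (∑ i ∈ Icc 1 n, (1 - exp (-T ω)) ^ i) ∂μ =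
      ENNReal.ofReal (exp (harmonic n) - (n + 1)) := by
  simp_rw [← integral_sum_mul_pow_mul_exp_neg]
  rw [lintegral_comp_eq_lintegral_meas_lt_mul μ (ae_of_all _ hT0) hT.aemeasurable
    (fun t _ => Continuous.intervalIntegrable (by fun_prop) _ _) ?_,
    ← lintegral_Ioi_survival_mul_weight n]
  · refine setLIntegral_congr_fun measurableSet_Ioi fun s hs => ?_
    rw [ENNReal.ofReal_mul (exp_nonneg _), ← integral_one_sub_exp_neg_pow, ← hTdist s (le_of_lt hs),
      ENNReal.ofReal_toReal (measure_ne_top μ _)]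
  · refine (ae_restrict_iff' measurableSet_Ioi).mpr (ae_of_all _ fun s hs => ?_)
    have := (one_sub_exp_neg_mem_Icc (le_of_lt hs)).1
    positivity

theorem lintegral_natCast_apply_of_poisson_of_indepFun {Ω : Type*} [MeasurableSpace Ω]
    {μ : Measure Ω} [IsFiniteMeasure μ] {N : ℝ → Ω → ℕ} (hN : ∀ t, Measurable (N t))
    (hmono : ∀ ω, Monotone fun t => N t ω) {T : Ω → ℝ} (hT : Measurable T) (hT0 : ∀ ω, 0 ≤ T ω)
    (hindep : IndepFun (fun ω t => N t ω) T μ) {Λ : ℝ → ℝ} (hΛc : ContinuousOn Λ (Set.Ici 0))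
    (hΛ0 : ∀ t, 0 ≤ t → 0 ≤ Λ t) {C : ℝ} (hΛC : ∀ t, 0 ≤ t → Λ t ≤ C)
    (hpois : ∀ t, 0 ≤ t → ∀ k : ℕ, (μ {ω | N t ω = k}).toReal = exp (-Λ t) * Λ t ^ k / k !) :
    AEMeasurable (fun ω => (N (T ω) ω : ℝ≥0∞)) μ ∧
      ∫⁻ ω, (N (T ω) ω : ℝ≥0∞) ∂μ = ∫⁻ ω, ENNReal.ofReal (Λ (T ω)) ∂μ :=
  lintegral_apply_of_indepFun_of_monotone (X := fun t ω => (N t ω : ℝ≥0∞))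
    (fun t => measurable_from_top.comp (hN t)) hT hT0
    (hindep.comp (measurable_pi_lambda _ fun t => measurable_from_top.comp (measurable_pi_apply t))
      measurable_id)
    (fun t ht => lintegral_natCast_of_poisson (hN t) (hΛ0 t ht) (hpois t ht))
    (ENNReal.continuous_ofReal.comp_continuousOn hΛc) ENNReal.ofReal_ne_top
    (fun t ht => ENNReal.ofReal_le_ofReal (hΛC t ht)) fun ω _ _ hst => Nat.cast_le.mpr (hmono ω hst)

theorem integral_natCast_add_sum_mul_natCast {Ω ι : Type*} [MeasurableSpace Ω] {μ : Measure Ω}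
    [IsProbabilityMeasure μ] (c : ℕ) (s : Finset ι) (a : ι → ℕ) {f : ι → Ω → ℕ}
    (hf : ∀ i ∈ s, AEMeasurable (fun ω => (f i ω : ℝ≥0∞)) μ) :
    ∫ ω, ((c : ℝ) + ∑ i ∈ s, (a i : ℝ) * (f i ω : ℝ)) ∂μ =
      ((c : ℝ≥0∞) + ∑ i ∈ s, (a i : ℝ≥0∞) * ∫⁻ ω, (f i ω : ℝ≥0∞) ∂μ).toReal := by
  have hS : ∀ ω, ENNReal.ofReal ((c : ℝ) + ∑ i ∈ s, (a i : ℝ) * (f i ω : ℝ)) =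
      (c : ℝ≥0∞) + ∑ i ∈ s, (a i : ℝ≥0∞) * (f i ω : ℝ≥0∞) := fun ω => by
    rw [ENNReal.ofReal_add (by positivity) (by positivity), ENNReal.ofReal_natCast,
      ENNReal.ofReal_sum_of_nonneg fun i _ => by positivity]
    simp_rw [ENNReal.ofReal_mul (Nat.cast_nonneg _), ENNReal.ofReal_natCast]
  have hmeas : AEMeasurable (fun ω => (c : ℝ) + ∑ i ∈ s, (a i : ℝ) * (f i ω : ℝ)) μ := by
    refine (Finset.aemeasurable_fun_sum _ fun i hi => ((hf i hi).ennreal_toReal.congr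
      (ae_of_all _ fun ω => ?_)).const_mul _).const_add _
    simp
  rw [integral_eq_lintegral_of_nonneg_ae (ae_of_all _ fun ω => by positivity)
      hmeas.aestronglyMeasurable, lintegral_congr hS, lintegral_add_left measurable_const,
    lintegral_const, measure_univ, mul_one,
    lintegral_finsetSum' _ fun i hi => (hf i hi).const_mul _]
  rw [sum_congr rfl fun i hi => lintegral_const_mul'' _ (hf i hi)]

theorem natCast_mul_lintegral_apply_of_intensity {Ω : Type*} [MeasurableSpace Ω] {μ : Measure Ω}
    [IsFiniteMeasure μ] {N : ℝ → Ω → ℕ} (hN : ∀ t, Measurable (N t))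
    (hmono : ∀ ω, Monotone fun t => N t ω) {T : Ω → ℝ} (hT : Measurable T) (hT0 : ∀ ω, 0 ≤ T ω)
    (hindep : IndepFun (fun ω t => N t ω) T μ) {i : ℕ} (hi : i ≠ 0)
    (hpois : ∀ t, 0 ≤ t → ∀ k : ℕ, (μ {ω | N t ω = k}).toReal =
      exp (-(∫ s in (0 : ℝ)..t, (1 - exp (-s)) ^ (i - 1) * exp (-s))) *
        (∫ s in (0 : ℝ)..t, (1 - exp (-s)) ^ (i - 1) * exp (-s)) ^ k / k !) :
    AEMeasurable (fun ω => (N (T ω) ω : ℝ≥0∞)) μ ∧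
      (i : ℝ≥0∞) * ∫⁻ ω, (N (T ω) ω : ℝ≥0∞) ∂μ =
        ∫⁻ ω, ENNReal.ofReal ((1 - exp (-T ω)) ^ i) ∂μ := by
  have hu := fun t (ht : 0 ≤ t) => one_sub_exp_neg_mem_Icc ht
  have hi1 : (1 : ℝ) ≤ i := by exact_mod_cast Nat.one_le_iff_ne_zero.mpr hi
  obtain ⟨hmeas, hmean⟩ := lintegral_natCast_apply_of_poisson_of_indepFun hN hmono hT hT0 hindep
    (Λ := fun t => (1 - exp (-t)) ^ i / i) (by fun_prop)
    (fun t ht => by have := (hu t ht).1; positivity)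
    (fun t ht => div_le_one_of_le₀ ((pow_le_one₀ (hu t ht).1 (hu t ht).2).trans hi1)
      (Nat.cast_nonneg i))
    fun t ht k => by rw [hpois t ht k, integral_one_sub_exp_neg_pow_mul_exp_neg hi]
  refine ⟨hmeas, ?_⟩
  rw [hmean, ← lintegral_const_mul' _ _ (ENNReal.natCast_ne_top i)]
  refine lintegral_congr fun ω => ?_
  rw [← ENNReal.ofReal_natCast, ← ENNReal.ofReal_mul (Nat.cast_nonneg i),
    mul_div_cancel₀ _ (by positivity)]

theorem natCast_add_one_le_exp_harmonic (n : ℕ) : (n : ℝ) + 1 ≤ exp (harmonic n) := by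
  rw [← log_le_iff_le_exp (by positivity)]
  exact_mod_cast log_add_one_le_harmonic n

theorem stmt14_general
    {Ω : Type*} [MeasurableSpace Ω] (μ : Measure Ω) [IsProbabilityMeasure μ]
    (m : ℕ) (hm : 2 ≤ m)
    (N : ℕ → ℝ → Ω → ℕ) (hNmeas : ∀ i t, Measurable (N i t))
    (hNmono : ∀ i ω, Monotone fun t => N i t ω)
    (hNpois : ∀ i, 1 ≤ i → i ≤ m - 1 → ∀ t, 0 ≤ t → ∀ k : ℕ,
      (μ {ω | N i t ω = k}).toReal =
        Real.exp (-(∫ s in (0 : ℝ)..t, (1 - Real.exp (-s)) ^ (i - 1) * Real.exp (-s))) *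
          (∫ s in (0 : ℝ)..t, (1 - Real.exp (-s)) ^ (i - 1) * Real.exp (-s)) ^ k /
            (k.factorial : ℝ))
    (T : Ω → ℝ) (hT : Measurable T) (hTpos : ∀ ω, 0 ≤ T ω)
    (hTdist : ∀ t, 0 ≤ t → (μ {ω | t < T ω}).toReal =
      Real.exp (-(∫ s in (0 : ℝ)..t, (1 - Real.exp (-s)) ^ (m - 1))))
    (hindepT : ∀ i, IndepFun (fun ω => fun t : ℝ => N i t ω) T μ)
    :
    ∫ ω, ((m : ℝ) + ∑ i ∈ Finset.Icc 1 (m - 1), (i : ℝ) * (N i (T ω) ω : ℝ)) ∂μ =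
      Real.exp ((harmonic (m - 1) : ℚ) : ℝ) := by
  obtain ⟨n, rfl⟩ : ∃ n, m = n + 1 := ⟨m - 1, by omega⟩
  rw [Nat.add_sub_cancel] at hNpois hTdist ⊢
  have hN := fun i (hi : i ∈ Icc 1 n) => natCast_mul_lintegral_apply_of_intensity (hNmeas i)
    (hNmono i) hT hTpos (hindepT i) (by grind) (hNpois i (mem_Icc.mp hi).1 (mem_Icc.mp hi).2)
  rw [integral_natCast_add_sum_mul_natCast _ _ _ fun i hi => (hN i hi).1,
    sum_congr rfl fun i hi => (hN i hi).2, ← lintegral_finsetSum' _ fun i _ => by fun_prop]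
  simp_rw [← ENNReal.ofReal_sum_of_nonneg fun i _ =>
    pow_nonneg (one_sub_exp_neg_mem_Icc (hTpos _)).1 i]
  rw [lintegral_sum_pow_one_sub_exp_neg hT hTpos n hTdist, ← ENNReal.ofReal_natCast,
    ← ENNReal.ofReal_add (by positivity) (sub_nonneg.mpr (natCast_add_one_le_exp_harmonic n)),
    Nat.cast_succ, add_sub_cancel, ENNReal.toReal_ofReal (exp_nonneg _)]

/-- Poisson representation: `E(S̃) = e^{H_{m-1}}` where `S̃ = m + ∑ i N^{(i)}_T`. -/
theorem stmt14
    {Ω : Type*} [MeasurableSpace Ω] (μ : Measure Ω) [IsProbabilityMeasure μ]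
    (m : ℕ) (hm : 2 ≤ m)
    (N : ℕ → ℝ → Ω → ℕ) (hNmeas : ∀ i t, Measurable (N i t))
    (hNmono : ∀ i ω, Monotone fun t => N i t ω)
    (hN0 : ∀ i ω, N i 0 ω = 0)
    (hNpois : ∀ i, 1 ≤ i → i ≤ m - 1 → ∀ t, 0 ≤ t → ∀ k : ℕ,
      (μ {ω | N i t ω = k}).toReal =
        Real.exp (-(∫ s in (0 : ℝ)..t, (1 - Real.exp (-s)) ^ (i - 1) * Real.exp (-s))) *
          (∫ s in (0 : ℝ)..t, (1 - Real.exp (-s)) ^ (i - 1) * Real.exp (-s)) ^ k /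
            (k.factorial : ℝ))
    (T : Ω → ℝ) (hT : Measurable T) (hTpos : ∀ ω, 0 ≤ T ω)
    (hTdist : ∀ t, 0 ≤ t → (μ {ω | t < T ω}).toReal =
      Real.exp (-(∫ s in (0 : ℝ)..t, (1 - Real.exp (-s)) ^ (m - 1))))
    (hindepN : iIndepFun (fun i => fun ω => fun t : ℝ => N i t ω) μ)
    (hindepT : ∀ i, IndepFun (fun ω => fun t : ℝ => N i t ω) T μ)
    :
    ∫ ω, ((m : ℝ) + ∑ i ∈ Finset.Icc 1 (m - 1), (i : ℝ) * (N i (T ω) ω : ℝ)) ∂μ =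
      Real.exp ((harmonic (m - 1) : ℚ) : ℝ) :=
  stmt14_general μ m hm N hNmeas hNmono hNpois T hT hTpos hTdist hindepT
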